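/- Let n ≥ 3 be an integer, let A = (a_{ij}) be a real symmetric n×n matrix with trace H, and let k ≥ 3/2 be a real number. Then k·|A|² − a_{11}a_{nn} − Σ_{i=1}^{n} a_{1i}² − Σ_{i=2}^{n} a_{in}² + H·(a_{11} + a_{nn}) ≥ (k/2 − 3/4 + k/(n−2))·(a_{11} + a_{nn})² + (1 − 2k/(n−2))·H·(a_{11} + a_{nn}) + (k/(n−2))·H². -/
import Mathlib


open Finset

/-- intermediate reduction of the matrix inequality. -/
theorem matrix_ineq_intermediate (n : ℕ) (hn : 3 ≤ n) (k : ℝ) (hk : 3 / 2 ≤ k)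
    (A : Matrix (Fin n) (Fin n) ℝ) (hA : A.IsSymm) :
    k * (∑ i, ∑ j, (A i j) ^ 2)
      - A ⟨0, by omega⟩ ⟨0, by omega⟩ * A ⟨n - 1, by omega⟩ ⟨n - 1, by omega⟩
      - (∑ i, (A ⟨0, by omega⟩ i) ^ 2)
      - (∑ i ∈ Finset.univ.erase ⟨0, by omega⟩, (A i ⟨n - 1, by omega⟩) ^ 2)
      + (∑ i, A i i) * (A ⟨0, by omega⟩ ⟨0, by omega⟩ + A ⟨n - 1, by omega⟩ ⟨n - 1, by omega⟩)
    ≥ (k / 2 - 3 / 4 + k / ((n : ℝ) - 2)) *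
        (A ⟨0, by omega⟩ ⟨0, by omega⟩ + A ⟨n - 1, by omega⟩ ⟨n - 1, by omega⟩) ^ 2
      + (1 - 2 * k / ((n : ℝ) - 2)) * (∑ i, A i i) *
        (A ⟨0, by omega⟩ ⟨0, by omega⟩ + A ⟨n - 1, by omega⟩ ⟨n - 1, by omega⟩)
      + (k / ((n : ℝ) - 2)) * (∑ i, A i i) ^ 2 := by
  set i0 : Fin n := ⟨0, by omega⟩ with hi0
  set iN : Fin n := ⟨n - 1, by omega⟩ with hiN
  have hne : i0 ≠ iN := by
    simp only [hi0, hiN, Ne, Fin.mk.injEq]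
    omega
  have hsym : ∀ i j, A i j = A j i := fun i j => hA.apply j i
  set a := A i0 i0 with ha
  set b := A iN iN with hb
  set H := ∑ i, A i i with hH
  set S := ∑ i, ∑ j, (A i j) ^ 2 with hS
  set s2 : Finset (Fin n) := (Finset.univ.erase i0).erase iN with hs2
  have hiN1 : iN ∈ Finset.univ.erase i0 :=
    Finset.mem_erase.2 ⟨hne.symm, Finset.mem_univ _⟩
  set R := ∑ i ∈ Finset.univ.erase i0, (A i0 i) ^ 2 with hR
  set C := ∑ i ∈ s2, (A i iN) ^ 2 with hC
  set M := ∑ i ∈ s2, (A i i) ^ 2 with hM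
  -- the two subtracted sums
  have e1 : ∑ i, (A i0 i) ^ 2 = R + a ^ 2 :=
    (Finset.sum_erase_add Finset.univ _ (Finset.mem_univ i0)).symm
  have e2 : ∑ i ∈ Finset.univ.erase i0, (A i iN) ^ 2 = C + b ^ 2 :=
    (Finset.sum_erase_add _ _ hiN1).symm
  -- diagonal decomposition
  have e3 : H = (∑ i ∈ s2, A i i) + b + a := by
    rw [hH, ← Finset.sum_erase_add Finset.univ _ (Finset.mem_univ i0),
      ← Finset.sum_erase_add _ _ hiN1]
  -- cardinality
  have hcard2 : s2.card = n - 2 := by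
    rw [hs2, Finset.card_erase_of_mem hiN1, Finset.card_erase_of_mem (Finset.mem_univ i0),
      Finset.card_univ, Fintype.card_fin]
    omega
  have hcard : (s2.card : ℝ) = (n : ℝ) - 2 := by
    rw [hcard2, Nat.cast_sub (by omega)]
    norm_num
  -- splitting the full square sum by rows
  have splitS : S = (∑ i ∈ s2, ∑ j, (A i j) ^ 2) + (∑ j, (A iN j) ^ 2)
      + (∑ j, (A i0 j) ^ 2) := by
    rw [hS, ← Finset.sum_erase_add Finset.univ _ (Finset.mem_univ i0),
      ← Finset.sum_erase_add _ _ hiN1]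
  have rowN : ∑ j, (A iN j) ^ 2 = C + b ^ 2 + (A iN i0) ^ 2 := by
    rw [← Finset.sum_erase_add Finset.univ _ (Finset.mem_univ i0),
      ← Finset.sum_erase_add _ _ hiN1]
    congr 2
    exact Finset.sum_congr rfl fun i _ => by rw [hsym]
  -- rows in the middle block
  have rowmid : ∀ i ∈ s2, (A i i0) ^ 2 + (A i iN) ^ 2 + (A i i) ^ 2
      ≤ ∑ j, (A i j) ^ 2 := by
    intro i hi
    have hi1 : i ≠ iN := Finset.ne_of_mem_erase hi
    have hi0' : i ≠ i0 := Finset.ne_of_mem_erase (Finset.mem_of_mem_erase hi)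
    have hset : (A i i0) ^ 2 + (A i iN) ^ 2 + (A i i) ^ 2
        = ∑ j ∈ ({i0, iN, i} : Finset (Fin n)), (A i j) ^ 2 := by
      rw [Finset.sum_insert (by simp [hne, hi0'.symm]),
        Finset.sum_insert (by simp [hi1.symm]), Finset.sum_singleton]
      ring
    rw [hset]
    exact Finset.sum_le_sum_of_subset_of_nonneg (Finset.subset_univ _)
      (fun j _ _ => sq_nonneg _)
  have hmid : ∑ i ∈ s2, ((A i i0) ^ 2 + (A i iN) ^ 2 + (A i i) ^ 2)
      ≤ ∑ i ∈ s2, ∑ j, (A i j) ^ 2 := Finset.sum_le_sum rowmid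
  have eR : R = (∑ i ∈ s2, (A i0 i) ^ 2) + (A i0 iN) ^ 2 :=
    (Finset.sum_erase_add _ _ hiN1).symm
  have emid : ∑ i ∈ s2, ((A i i0) ^ 2 + (A i iN) ^ 2 + (A i i) ^ 2)
      = (R - (A i0 iN) ^ 2) + C + M := by
    rw [Finset.sum_add_distrib, Finset.sum_add_distrib, eR]
    have : ∑ i ∈ s2, (A i i0) ^ 2 = ∑ i ∈ s2, (A i0 i) ^ 2 :=
      Finset.sum_congr rfl fun i _ => by rw [hsym]
    rw [this]
    ring
  have hq : (A iN i0) ^ 2 = (A i0 iN) ^ 2 := by rw [hsym]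
  -- main lower bound on S
  have hSge : a ^ 2 + b ^ 2 + M + 2 * R + 2 * C ≤ S := by
    rw [splitS, rowN, e1, hq]
    linarith [hmid, emid.symm.le, emid.le]
  -- Cauchy-Schwarz on the middle diagonal
  have hCS : (∑ i ∈ s2, A i i) ^ 2 ≤ (s2.card : ℝ) * M := sq_sum_le_card_mul_sum_sq
  have hd : (0 : ℝ) < (n : ℝ) - 2 := by
    have : (3 : ℝ) ≤ (n : ℝ) := by exact_mod_cast hn
    linarith
  have hCS' : (H - a - b) ^ 2 ≤ ((n : ℝ) - 2) * M := by
    have : H - a - b = ∑ i ∈ s2, A i i := by rw [e3]; ring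
    rw [this, ← hcard]
    exact hCS
  have hknn : (0 : ℝ) ≤ k := by linarith
  have hRnn : 0 ≤ R := Finset.sum_nonneg fun i _ => sq_nonneg _
  have hCnn : 0 ≤ C := Finset.sum_nonneg fun i _ => sq_nonneg _
  rw [ge_iff_le, e1, e2]
  clear_value a b H S R C M
  clear hmid emid eR rowN splitS rowmid e3 hq hcard hcard2 hCS e1 e2 hH hS hR hC hM ha hb hiN1 hs2 s2 hsym hne hA A hi0 hiN iN i0 hn
  have h2 : k / ((n : ℝ) - 2) * (H - a - b) ^ 2 ≤ k * M := by
    rw [div_mul_eq_mul_div, div_le_iff₀ hd]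
    nlinarith [mul_le_mul_of_nonneg_left hCS' hknn]
  have h3 : (k / 2 - 3 / 4) * (a + b) ^ 2 ≤ (k - 1) * (a ^ 2 + b ^ 2) - a * b := by
    nlinarith [mul_nonneg (show (0:ℝ) ≤ k/2 - 1/4 by linarith) (sq_nonneg (a - b))]
  have hkS : k * (a ^ 2 + b ^ 2 + M + 2 * R + 2 * C) ≤ k * S :=
    mul_le_mul_of_nonneg_left hSge hknn
  have hR2 : R ≤ 2 * k * R := by nlinarith
  have hC2 : C ≤ 2 * k * C := by nlinarith
  have key : (k / 2 - 3 / 4 + k / ((n : ℝ) - 2)) * (a + b) ^ 2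
      + (1 - 2 * k / ((n : ℝ) - 2)) * H * (a + b)
      + (k / ((n : ℝ) - 2)) * H ^ 2
      = (k / 2 - 3 / 4) * (a + b) ^ 2 + k / ((n : ℝ) - 2) * (H - a - b) ^ 2
      + H * (a + b) := by ring
  rw [key]
  nlinarith [h2, h3, hkS, hR2, hC2]
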